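/- Markov property of the trace for χ = E_n: for all 2ⁿ × 2ⁿ complex matrices A and B, Trace((A ⊗ I₂)·(I₂^{⊗(n−1)} ⊗ E)·(B ⊗ I₂)) = Trace(A·B), where the trace on the left is of 2^{n+1} × 2^{n+1} matrices. Equivalently, with normalized traces Tr_m = (1/2^m)·Trace, one has Tr_{n+1}((A ⊗ I₂)(I₂^{⊗(n−1)} ⊗ E)(B ⊗ I₂)) = Tr_{n+1}(I₂^{⊗(n−1)} ⊗ E)·Tr_{n+1}((A·B) ⊗ I₂). -/

import Mathlib

open Matrix

noncomputable section

/-- Kronecker product of square matrices, reindexed to `Fin (a * b)`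
(lexicographically: the first factor is the most significant). -/
def kron {a b : ℕ} (A : Matrix (Fin a) (Fin a) ℂ) (B : Matrix (Fin b) (Fin b) ℂ) :
    Matrix (Fin (a * b)) (Fin (a * b)) ℂ :=
  Matrix.reindex finProdFinEquiv finProdFinEquiv (Matrix.kroneckerMap (· * ·) A B)

/-- The matrix `E` with rows `(0,0,0,0), (0,1,1,0), (0,1,1,0), (0,0,0,0)`. -/
def EmatBMW : Matrix (Fin 4) (Fin 4) ℂ :=
  !![0, 0, 0, 0; 0, 1, 1, 0; 0, 1, 1, 0; 0, 0, 0, 0]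

/-- `I₂^{⊗(n−1)} ⊗ M` as a `2ⁿ·2 × 2ⁿ·2` matrix.  The size condition in the `dite` holds
whenever `n ≥ 1`. -/
def bigTensor (n : ℕ) (M : Matrix (Fin 4) (Fin 4) ℂ) :
    Matrix (Fin (2 ^ n * 2)) (Fin (2 ^ n * 2)) ℂ :=
  if h : 2 ^ (n - 1) * 4 = 2 ^ n * 2 then
    Matrix.reindex (finCongr h) (finCongr h)
      (kron (1 : Matrix (Fin (2 ^ (n - 1))) (Fin (2 ^ (n - 1))) ℂ) M)
  else 1


/-! Cycling the trace reduces both claims to `Tr((I ⊗ E)(C ⊗ I₂)) = Tr C` for all `C`.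
Tracing out the last qubit, the left side is `Tr(Tr₂(I ⊗ E) · C)`, and
`Tr₂(I ⊗ E) = I ⊗ Tr₂ E` is the identity because the partial trace of `E` over its second
qubit is `I₂`. Taking `C = 1` gives `Tr(I ⊗ E) = 2ⁿ`, which with `Tr((AB) ⊗ I₂) = 2 Tr(AB)`
yields the normalized form. -/

open scoped Kronecker

namespace Matrix

variable {l m n p q R : Type*} [Fintype p]

def traceRight [AddCommMonoid R] (M : Matrix (m × p) (n × p) R) : Matrix m n R :=
  of fun i j => ∑ s, M (i, s) (j, s)

theorem trace_reindex [AddCommMonoid R] [Fintype m] [Fintype n] (e : m ≃ n)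
    (M : Matrix m m R) : trace (reindex e e M) = trace M :=
  Fintype.sum_equiv e.symm _ _ fun _ => rfl

theorem reindex_mul_reindex [NonUnitalNonAssocSemiring R] [Fintype m] [Fintype n] (e : m ≃ n)
    (M N : Matrix m m R) : reindex e e M * reindex e e N = reindex e e (M * N) :=
  submatrix_mul_equiv M N _ _ _

theorem trace_mul_kronecker_one [CommSemiring R] [Fintype m] [DecidableEq p]
    (M : Matrix (m × p) (m × p) R) (C : Matrix m m R) :
    trace (M * C ⊗ₖ (1 : Matrix p p R)) = trace (traceRight M * C) := by
  simp only [trace, diag_apply, mul_apply, kroneckerMap_apply, one_apply, mul_ite, mul_one,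
    mul_zero, Fintype.sum_prod_type, Finset.sum_ite_eq', Finset.mem_univ, ↓reduceIte, traceRight,
    of_apply, Finset.sum_mul]
  exact Finset.sum_congr rfl fun _ _ => Finset.sum_comm

theorem traceRight_reindex_left [AddCommMonoid R] (e : m ≃ l) (f : n ≃ q)
    (M : Matrix (m × p) (n × p) R) :
    traceRight (reindex (e.prodCongr (.refl p)) (f.prodCongr (.refl p)) M) =
      reindex e f (traceRight M) :=
  rfl

theorem traceRight_kronecker_assoc [CommSemiring R] (A : Matrix l n R)
    (N : Matrix (m × p) (q × p) R) :
    traceRight (reindex (Equiv.prodAssoc l m p).symm (Equiv.prodAssoc n q p).symm (A ⊗ₖ N)) =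
      A ⊗ₖ traceRight N := by
  ext ⟨i, i'⟩ ⟨j, j'⟩
  simp [traceRight, Finset.mul_sum]

end Matrix

theorem kron_mul {a b : ℕ} (A C : Matrix (Fin a) (Fin a) ℂ) (B D : Matrix (Fin b) (Fin b) ℂ) :
    kron A B * kron C D = kron (A * C) (B * D) := by
  rw [kron, kron, kron, reindex_mul_reindex, mul_kronecker_mul]

theorem kron_one_one {a b : ℕ} :
    kron (1 : Matrix (Fin a) (Fin a) ℂ) (1 : Matrix (Fin b) (Fin b) ℂ) = 1 := by
  simp [kron]

theorem trace_kron {a b : ℕ} (A : Matrix (Fin a) (Fin a) ℂ) (B : Matrix (Fin b) (Fin b) ℂ) :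
    trace (kron A B) = trace A * trace B := by
  rw [kron, trace_reindex, trace_kronecker]

def finTwoProdFinTwoEquiv : Fin 2 × Fin 2 ≃ Fin 4 :=
  finProdFinEquiv

def finTwoPowSuccEquiv (k : ℕ) : Fin (2 ^ k) × Fin 2 ≃ Fin (2 ^ (k + 1)) :=
  finProdFinEquiv.trans (finCongr (pow_succ 2 k).symm)

theorem finProdFinEquiv_trans_finCongr (k : ℕ) (h : 2 ^ k * 4 = 2 ^ (k + 1) * 2) :
    finProdFinEquiv.trans (finCongr h) =
      ((Equiv.refl _).prodCongr finTwoProdFinTwoEquiv.symm).trans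
        ((Equiv.prodAssoc _ _ _).symm.trans
          (((finTwoPowSuccEquiv k).prodCongr (Equiv.refl _)).trans finProdFinEquiv)) := by
  ext ⟨y, j⟩
  fin_cases j <;> simp [finTwoPowSuccEquiv, finTwoProdFinTwoEquiv, finProdFinEquiv] <;> ring

theorem bigTensor_succ (k : ℕ) (M : Matrix (Fin 4) (Fin 4) ℂ) :
    bigTensor (k + 1) M =
      reindex finProdFinEquiv finProdFinEquiv
        (reindex ((finTwoPowSuccEquiv k).prodCongr (.refl _))
          ((finTwoPowSuccEquiv k).prodCongr (.refl _))
          (reindex (Equiv.prodAssoc _ _ _).symm (Equiv.prodAssoc _ _ _).symm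
            ((1 : Matrix (Fin (2 ^ k)) (Fin (2 ^ k)) ℂ) ⊗ₖ
              reindex finTwoProdFinTwoEquiv.symm finTwoProdFinTwoEquiv.symm M))) := by
  have h : 2 ^ k * 4 = 2 ^ (k + 1) * 2 := by ring
  rw [bigTensor, dif_pos (show 2 ^ (k + 1 - 1) * 4 = 2 ^ (k + 1) * 2 from h)]
  show reindex (finCongr h) (finCongr h) (kron (1 : Matrix (Fin (2 ^ k)) (Fin (2 ^ k)) ℂ) M) = _
  rw [kron, kroneckerMap_reindex_right]
  simp only [← Equiv.trans_apply, reindex_trans, finProdFinEquiv_trans_finCongr k h,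
    Equiv.trans_assoc]

theorem trace_bigTensor_mul_kron_one (k : ℕ) (M : Matrix (Fin 4) (Fin 4) ℂ)
    (hM : traceRight (reindex finTwoProdFinTwoEquiv.symm finTwoProdFinTwoEquiv.symm M) = 1)
    (C : Matrix (Fin (2 ^ (k + 1))) (Fin (2 ^ (k + 1))) ℂ) :
    trace (bigTensor (k + 1) M * kron C 1) = trace C := by
  rw [bigTensor_succ, kron, reindex_mul_reindex, trace_reindex, trace_mul_kronecker_one,
    traceRight_reindex_left, traceRight_kronecker_assoc, hM, one_kronecker_one, reindex_apply,
    submatrix_one_equiv, one_mul]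

theorem traceRight_EmatBMW :
    traceRight (reindex finTwoProdFinTwoEquiv.symm finTwoProdFinTwoEquiv.symm EmatBMW) = 1 := by
  ext i j
  fin_cases i <;> fin_cases j <;>
    simp [traceRight, EmatBMW, one_apply, Fin.sum_univ_two, finTwoProdFinTwoEquiv, finProdFinEquiv]

/-- Markov property for `χ = E_n`: for all `2ⁿ × 2ⁿ` matrices `A, B`,
`Trace((A ⊗ I₂)(I₂^{⊗(n−1)} ⊗ E)(B ⊗ I₂)) = Trace(A·B)`; equivalently, with the normalized
traces `Tr_m = 2^{−m}·Trace`,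
`Tr_{n+1}((A ⊗ I₂)(I₂^{⊗(n−1)} ⊗ E)(B ⊗ I₂)) = Tr_{n+1}(I₂^{⊗(n−1)} ⊗ E)·Tr_{n+1}((A·B) ⊗ I₂)`. -/
theorem stmt_19 (n : ℕ) (hn : 2 ≤ n) :
    ∀ A B : Matrix (Fin (2 ^ n)) (Fin (2 ^ n)) ℂ,
      Matrix.trace (kron A (1 : Matrix (Fin 2) (Fin 2) ℂ) * bigTensor n EmatBMW *
          kron B (1 : Matrix (Fin 2) (Fin 2) ℂ)) =
        Matrix.trace (A * B) ∧
      ((2 : ℂ) ^ (n + 1))⁻¹ *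
          Matrix.trace (kron A (1 : Matrix (Fin 2) (Fin 2) ℂ) * bigTensor n EmatBMW *
            kron B (1 : Matrix (Fin 2) (Fin 2) ℂ)) =
        (((2 : ℂ) ^ (n + 1))⁻¹ * Matrix.trace (bigTensor n EmatBMW)) *
          (((2 : ℂ) ^ (n + 1))⁻¹ *
            Matrix.trace (kron (A * B) (1 : Matrix (Fin 2) (Fin 2) ℂ))) := by
  intro A B
  obtain ⟨k, rfl⟩ : ∃ k, n = k + 1 := ⟨n - 1, by omega⟩
  have hE := trace_bigTensor_mul_kron_one k EmatBMW traceRight_EmatBMW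
  have hmarkov : trace (kron A 1 * bigTensor (k + 1) EmatBMW * kron B 1) = trace (A * B) := by
    rw [trace_mul_cycle, kron_mul, trace_mul_comm, one_mul, hE, trace_mul_comm]
  have htrace : trace (bigTensor (k + 1) EmatBMW) = 2 ^ (k + 1) := by
    simpa [kron_one_one] using hE 1
  refine ⟨hmarkov, ?_⟩
  rw [hmarkov, htrace, trace_kron, trace_one, Fintype.card_fin]
  field_simp
  ring
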